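/- Let Π_L ∈ [0,1], ρ_in = diag((1+Π_L)/2, (1-Π_L)/2, 0). For U ranging over 3×3 unitary matrices, define P_{γ→a}(U) = Tr(diag(0,0,1) U ρ_in U†) and P_{γ→γ}(U) = Tr(diag(1,1,0) U ρ_in U†). Then for every unitary U, P_{γ→γ}(U) ≥ (1 − Π_L)/2. -/
import Mathlib


open Matrix

set_option maxHeartbeats 1000000 in
theorem survival_probability_lower_bound
    (PiL : ℝ) (hPiL : PiL ∈ Set.Icc (0 : ℝ) 1)
    (ρin : Matrix (Fin 3) (Fin 3) ℂ)
    (hρin : ρin = Matrix.diagonal ![((1 + PiL) / 2 : ℂ), ((1 - PiL) / 2 : ℂ), 0]) :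
    ∀ U : Matrix (Fin 3) (Fin 3) ℂ, U ∈ Matrix.unitaryGroup (Fin 3) ℂ →
      (Matrix.trace (Matrix.diagonal ![1, 1, 0] * U * ρin * Uᴴ)).re ≥ (1 - PiL) / 2 := by
  intro U hU
  obtain ⟨h0, h1⟩ := hPiL
  have hUr : U * Uᴴ = 1 := Matrix.mem_unitaryGroup_iff.mp hU
  have hUc : Uᴴ * U = 1 := Matrix.mem_unitaryGroup_iff'.mp hU
  have hrow : (U * Uᴴ) 2 2 = 1 := by rw [hUr]; simp [Matrix.one_apply]
  have hcol0 : (Uᴴ * U) 0 0 = 1 := by rw [hUc]; simp [Matrix.one_apply]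
  have hcol1 : (Uᴴ * U) 1 1 = 1 := by rw [hUc]; simp [Matrix.one_apply]
  simp only [Matrix.mul_apply, Matrix.conjTranspose_apply, Fin.sum_univ_three] at hrow hcol0 hcol1
  have hrowre := congrArg Complex.re hrow
  have hcol0re := congrArg Complex.re hcol0
  have hcol1re := congrArg Complex.re hcol1
  simp only [Complex.star_def, Complex.mul_re, Complex.add_re, Complex.conj_re, Complex.conj_im,
    Complex.one_re, mul_neg, neg_mul, neg_neg] at hrowre hcol0re hcol1re
  subst hρin
  simp only [Matrix.trace, Matrix.diag, Matrix.mul_apply, Matrix.conjTranspose_apply,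
    Matrix.diagonal_apply, Fin.sum_univ_three, Matrix.cons_val_zero, Matrix.cons_val_one,
    Matrix.head_cons, Matrix.cons_val_two, Matrix.tail_cons, Fin.isValue]
  simp only [show ((0:Fin 3) = 2) = False by simp [Fin.ext_iff],
    show ((1:Fin 3) = 2) = False by simp [Fin.ext_iff],
    show ((2:Fin 3) = 2) = True by simp, if_true, if_false]
  norm_num [Complex.add_re, Complex.mul_re, Complex.mul_im, Complex.div_re, Complex.div_im,
    Complex.ofReal_re, Complex.ofReal_im, Complex.normSq, Complex.conj_re, Complex.conj_im,
    Complex.add_im, Complex.one_re, Complex.one_im]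
  nlinarith [sq_nonneg ((U 2 0).re), sq_nonneg ((U 2 0).im), sq_nonneg ((U 2 1).re),
    sq_nonneg ((U 2 1).im), sq_nonneg ((U 2 2).re), sq_nonneg ((U 2 2).im),
    mul_nonneg (sub_nonneg.mpr h0) (add_nonneg (sq_nonneg (U 2 0).re) (sq_nonneg (U 2 0).im)),
    mul_nonneg h0 (add_nonneg (sq_nonneg (U 2 2).re) (sq_nonneg (U 2 2).im)),
    mul_nonneg (add_nonneg h0 h0) (add_nonneg (sq_nonneg (U 2 2).re) (sq_nonneg (U 2 2).im))]
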